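/- Suppose a smooth scalar q and smooth vector field U_q on ℝ × ℝ³ satisfy the continuity equation ∂ₜq + div(q U_q) = 0, and a smooth scalar ρ satisfies ∂ₜρ + U_q·∇ρ = 0. Then B = ∇q × ∇ρ satisfies ∂ₜB − curl(U_q × B) = −∇(q div U_q) × ∇ρ. -/

import Mathlib

noncomputable section

/-- Space: ℝ³ as functions `Fin 3 → ℝ`. -/
abbrev V : Type := Fin 3 → ℝ

/-- Standard basis vector. -/
def e3 (i : Fin 3) : V := fun j => if j = i then 1 else 0

/-- Partial derivative in direction `i`. -/
def pd (i : Fin 3) (f : V → ℝ) (x : V) : ℝ := fderiv ℝ f x (e3 i)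

/-- Gradient. -/
def grad3 (f : V → ℝ) (x : V) : V := fun i => pd i f x

/-- Divergence. -/
def div3 (v : V → V) (x : V) : ℝ := ∑ i, pd i (fun y => v y i) x

/-- Curl. -/
def curl3 (v : V → V) (x : V) : V :=
  ![pd 1 (fun y => v y 2) x - pd 2 (fun y => v y 1) x,
    pd 2 (fun y => v y 0) x - pd 0 (fun y => v y 2) x,
    pd 0 (fun y => v y 1) x - pd 1 (fun y => v y 0) x]

/-- Cross product on ℝ³. -/
def cross3 (a b : V) : V :=
  ![a 1 * b 2 - a 2 * b 1, a 2 * b 0 - a 0 * b 2, a 0 * b 1 - a 1 * b 0]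

/-- Dot product. -/
def dot3 (a b : V) : ℝ := ∑ i, a i * b i

/-- Scalar Laplacian. -/
def lap3 (f : V → ℝ) (x : V) : ℝ := ∑ i, pd i (fun y => pd i f y) x

/-- Componentwise (vector) Laplacian. -/
def vlap3 (v : V → V) (x : V) : V := fun i => lap3 (fun y => v y i) x

/-- Directional derivative `(a·∇)b`. -/
def dirD (a b : V → V) (x : V) : V := fun i => dot3 (a x) (grad3 (fun y => b y i) x)

/-- Time derivative of a time-dependent scalar field. -/
def tder (f : ℝ → V → ℝ) (t : ℝ) (x : V) : ℝ := deriv (fun s => f s x) t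

/-- Time derivative of a time-dependent vector field. -/
def tderV (v : ℝ → V → V) (t : ℝ) (x : V) : V := fun i => deriv (fun s => v s x i) t

/-- Material derivative of a scalar: `∂ₜ f + u·∇f`. -/
def matD (u : ℝ → V → V) (f : ℝ → V → ℝ) (t : ℝ) (x : V) : ℝ :=
  tder f t x + dot3 (u t x) (grad3 (f t) x)

/-- Material derivative of a vector field, componentwise. -/
def matDV (u v : ℝ → V → V) (t : ℝ) (x : V) : V :=
  fun i => tderV v t x i + dot3 (u t x) (grad3 (fun y => v t y i) x)

/-- The perpendicular gradient `∇⊥θ = (∂_y θ, −∂_x θ, 0)`. -/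
def gradPerp (f : V → ℝ) (x : V) : V := ![pd 1 f x, -(pd 0 f x), 0]

abbrev P2 := ℝ × V

/-- directional derivative on the joint space -/
def Dd (w : P2) (F : P2 → ℝ) (p : P2) : ℝ := fderiv ℝ F p w

lemma Dd_smooth {F : P2 → ℝ} (hF : ContDiff ℝ (⊤:ℕ∞) F) (w : P2) :
    ContDiff ℝ (⊤:ℕ∞) (Dd w F) := by
  have h1 : ContDiff ℝ (⊤:ℕ∞) (fderiv ℝ F) := (contDiff_infty_iff_fderiv.mp hF).2
  exact (ContinuousLinearMap.apply ℝ ℝ w).contDiff.comp h1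

lemma Dd_comm {F : P2 → ℝ} (hF : ContDiff ℝ (⊤:ℕ∞) F) (v w : P2) (p : P2) :
    Dd v (Dd w F) p = Dd w (Dd v F) p := by
  have hd : ∀ y, HasFDerivAt F (fderiv ℝ F y) y := fun y =>
    (hF.differentiable (by simp) y).hasFDerivAt
  have h2 : HasFDerivAt (fderiv ℝ F) (fderiv ℝ (fderiv ℝ F) p) p :=
    (((contDiff_infty_iff_fderiv.mp hF).2.differentiable (by simp)) p).hasFDerivAt
  have hsymm := second_derivative_symmetric hd h2
  have key : ∀ u : P2, Dd u F = fun p => fderiv ℝ F p u := fun _ => rfl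
  have h3 : ∀ u : P2, fderiv ℝ (fun p => fderiv ℝ F p u) p =
      (ContinuousLinearMap.apply ℝ ℝ u).comp (fderiv ℝ (fderiv ℝ F) p) := by
    intro u
    exact (((ContinuousLinearMap.apply ℝ ℝ u).hasFDerivAt).comp p h2).fderiv
  show fderiv ℝ (Dd w F) p v = fderiv ℝ (Dd v F) p w
  rw [key w, key v, h3 w, h3 v]
  simpa using hsymm v w

def Ej (i : Fin 3) : P2 := ((0:ℝ), e3 i)
def Et : P2 := ((1:ℝ), (0:V))

lemma pd_slice' {F : P2 → ℝ} (hF : ContDiff ℝ (⊤:ℕ∞) F) (i : Fin 3) (t : ℝ) (x : V) :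
    pd i (fun y => F (t, y)) x = Dd (Ej i) F (t, x) := by
  have hx : HasFDerivAt (fun y : V => (t, y)) (ContinuousLinearMap.inr ℝ ℝ V) x :=
    hasFDerivAt_prodMk_right t x
  have h1 : HasFDerivAt (fun y : V => F (t, y))
      ((fderiv ℝ F (t, x)).comp (ContinuousLinearMap.inr ℝ ℝ V)) x :=
    (((hF.differentiable (by simp)) (t, x)).hasFDerivAt).comp x hx
  show fderiv ℝ (fun y => F (t, y)) x (e3 i) = _
  rw [h1.fderiv]
  rfl

lemma pd_slice (f : ℝ → V → ℝ) (hf : ContDiff ℝ (⊤:ℕ∞) (fun p : P2 => f p.1 p.2))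
    (i : Fin 3) (t : ℝ) (x : V) :
    pd i (f t) x = Dd (Ej i) (fun p : P2 => f p.1 p.2) (t, x) :=
  pd_slice' hf i t x

lemma deriv_slice' {F : P2 → ℝ} (hF : ContDiff ℝ (⊤:ℕ∞) F) (t : ℝ) (x : V) :
    deriv (fun s => F (s, x)) t = Dd Et F (t, x) := by
  have hx : HasFDerivAt (fun s : ℝ => (s, x)) (ContinuousLinearMap.inl ℝ ℝ V) t :=
    hasFDerivAt_prodMk_left t x
  have h1 : HasFDerivAt (fun s : ℝ => F (s, x))
      ((fderiv ℝ F (t, x)).comp (ContinuousLinearMap.inl ℝ ℝ V)) t :=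
    (((hF.differentiable (by simp)) (t, x)).hasFDerivAt).comp t hx
  rw [h1.hasDerivAt.deriv]
  rfl

lemma Dd_mul {F G : P2 → ℝ} (hF : ContDiff ℝ (⊤:ℕ∞) F) (hG : ContDiff ℝ (⊤:ℕ∞) G)
    (w p : P2) :
    Dd w (fun p => F p * G p) p = Dd w F p * G p + F p * Dd w G p := by
  show fderiv ℝ (fun p => F p * G p) p w = _
  rw [fderiv_fun_mul ((hF.differentiable (by simp)) p)
    ((hG.differentiable (by simp)) p)]
  simp [Dd]
  ring

lemma Dd_add {F G : P2 → ℝ} (hF : ContDiff ℝ (⊤:ℕ∞) F) (hG : ContDiff ℝ (⊤:ℕ∞) G)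
    (w p : P2) :
    Dd w (fun p => F p + G p) p = Dd w F p + Dd w G p := by
  show fderiv ℝ (fun p => F p + G p) p w = _
  rw [fderiv_fun_add ((hF.differentiable (by simp)) p)
    ((hG.differentiable (by simp)) p)]
  rfl

lemma Dd_sub {F G : P2 → ℝ} (hF : ContDiff ℝ (⊤:ℕ∞) F) (hG : ContDiff ℝ (⊤:ℕ∞) G)
    (w p : P2) :
    Dd w (fun p => F p - G p) p = Dd w F p - Dd w G p := by
  show fderiv ℝ (fun p => F p - G p) p w = _
  rw [fderiv_fun_sub ((hF.differentiable (by simp)) p)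
    ((hG.differentiable (by simp)) p)]
  rfl

lemma Dd_neg {F : P2 → ℝ} (w p : P2) :
    Dd w (fun p => -F p) p = -Dd w F p := by
  show fderiv ℝ (fun p => -F p) p w = _
  rw [fderiv_fun_neg]
  rfl

lemma pd_mul {f g : V → ℝ} (hf : DifferentiableAt ℝ f x) (hg : DifferentiableAt ℝ g x)
    (i : Fin 3) :
    pd i (fun y => f y * g y) x = pd i f x * g x + f x * pd i g x := by
  show fderiv ℝ (fun y => f y * g y) x (e3 i) = _
  rw [fderiv_fun_mul hf hg]
  simp [pd]
  ring

lemma pd_add {f g : V → ℝ} (hf : DifferentiableAt ℝ f x) (hg : DifferentiableAt ℝ g x)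
    (i : Fin 3) :
    pd i (fun y => f y + g y) x = pd i f x + pd i g x := by
  show fderiv ℝ (fun y => f y + g y) x (e3 i) = _
  rw [fderiv_fun_add hf hg]; rfl

lemma pd_sub {f g : V → ℝ} (hf : DifferentiableAt ℝ f x) (hg : DifferentiableAt ℝ g x)
    (i : Fin 3) :
    pd i (fun y => f y - g y) x = pd i f x - pd i g x := by
  show fderiv ℝ (fun y => f y - g y) x (e3 i) = _
  rw [fderiv_fun_sub hf hg]; rfl

lemma pd_neg {f : V → ℝ} (i : Fin 3) (x : V) :
    pd i (fun y => -f y) x = -pd i f x := by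
  show fderiv ℝ (fun y => -f y) x (e3 i) = _
  rw [fderiv_fun_neg]; rfl

lemma diff_slice {F : P2 → ℝ} (hF : ContDiff ℝ (⊤:ℕ∞) F) (t : ℝ) (x : V) :
    DifferentiableAt ℝ (fun y : V => F (t, y)) x :=
  (((hF.differentiable (by simp)) (t, x)).hasFDerivAt.comp x
    (hasFDerivAt_prodMk_right t x)).differentiableAt

lemma diff_slice_t {F : P2 → ℝ} (hF : ContDiff ℝ (⊤:ℕ∞) F) (t : ℝ) (x : V) :
    DifferentiableAt ℝ (fun s : ℝ => F (s, x)) t :=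
  (((hF.differentiable (by simp)) (t, x)).hasFDerivAt.comp t
    (hasFDerivAt_prodMk_left t x)).differentiableAt


set_option maxHeartbeats 3000000 in
/-- if `∂ₜq + div(q U_q) = 0` and `∂ₜρ + U_q·∇ρ = 0`, then
`B = ∇q × ∇ρ` satisfies `∂ₜB − curl(U_q × B) = −∇(q div U_q) × ∇ρ`. -/
theorem stmt8 (Uq : ℝ → V → V) (q ρ : ℝ → V → ℝ)
    (hU : ContDiff ℝ (⊤ : ℕ∞) (fun p : ℝ × V => Uq p.1 p.2))
    (hq : ContDiff ℝ (⊤ : ℕ∞) (fun p : ℝ × V => q p.1 p.2))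
    (hρ : ContDiff ℝ (⊤ : ℕ∞) (fun p : ℝ × V => ρ p.1 p.2))
    (hcont : ∀ t x, tder q t x + div3 (fun y => q t y • Uq t y) x = 0)
    (hadv : ∀ t x, tder ρ t x + dot3 (Uq t x) (grad3 (ρ t) x) = 0)
    (B : ℝ → V → V)
    (hB : ∀ t x, B t x = cross3 (grad3 (q t) x) (grad3 (ρ t) x)) :
    ∀ t x, tderV B t x - curl3 (fun y => cross3 (Uq t y) (B t y)) x =
      -(cross3 (grad3 (fun y => q t y * div3 (Uq t) y) x) (grad3 (ρ t) x)) := by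
  have hq' : ContDiff ℝ (⊤:ℕ∞) (fun p : P2 => q p.1 p.2) := hq.of_le (by simp)
  have hρ' : ContDiff ℝ (⊤:ℕ∞) (fun p : P2 => ρ p.1 p.2) := hρ.of_le (by simp)
  have hU' : ContDiff ℝ (⊤:ℕ∞) (fun p : P2 => Uq p.1 p.2) := hU.of_le (by simp)
  have hW : ∀ j : Fin 3, ContDiff ℝ (⊤:ℕ∞) (fun p : P2 => Uq p.1 p.2 j) := fun j => contDiff_pi.mp hU' j
  have cq : ∀ (a : Fin 3) (s : ℝ) (y : V), pd a (q s) y = Dd (Ej a) (fun p : P2 => q p.1 p.2) (s, y) := fun a s y => pd_slice' hq' a s y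
  have cρ : ∀ (a : Fin 3) (s : ℝ) (y : V), pd a (ρ s) y = Dd (Ej a) (fun p : P2 => ρ p.1 p.2) (s, y) := fun a s y => pd_slice' hρ' a s y
  have cU : ∀ (j a : Fin 3) (s : ℝ) (y : V), pd a (fun z => Uq s z j) y = Dd (Ej a) (fun p : P2 => Uq p.1 p.2 j) (s, y) := fun j a s y => pd_slice' (hW j) a s y
  have cq2 : ∀ (c a : Fin 3) (s : ℝ) (y : V), pd c (fun z => Dd (Ej a) (fun p : P2 => q p.1 p.2) (s, z)) y = Dd (Ej c) (Dd (Ej a) (fun p : P2 => q p.1 p.2)) (s, y) := fun c a s y => pd_slice' (Dd_smooth hq' _) c s y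
  have cρ2 : ∀ (c a : Fin 3) (s : ℝ) (y : V), pd c (fun z => Dd (Ej a) (fun p : P2 => ρ p.1 p.2) (s, z)) y = Dd (Ej c) (Dd (Ej a) (fun p : P2 => ρ p.1 p.2)) (s, y) := fun c a s y => pd_slice' (Dd_smooth hρ' _) c s y
  have cU2 : ∀ (j c a : Fin 3) (s : ℝ) (y : V), pd c (fun z => Dd (Ej a) (fun p : P2 => Uq p.1 p.2 j) (s, z)) y = Dd (Ej c) (Dd (Ej a) (fun p : P2 => Uq p.1 p.2 j)) (s, y) := fun j c a s y => pd_slice' (Dd_smooth (hW j) _) c s y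
  have ctq : ∀ (a : Fin 3) (s : ℝ) (y : V), deriv (fun u => Dd (Ej a) (fun p : P2 => q p.1 p.2) (u, y)) s = Dd Et (Dd (Ej a) (fun p : P2 => q p.1 p.2)) (s, y) := fun a s y => deriv_slice' (Dd_smooth hq' _) s y
  have ctρ : ∀ (a : Fin 3) (s : ℝ) (y : V), deriv (fun u => Dd (Ej a) (fun p : P2 => ρ p.1 p.2) (u, y)) s = Dd Et (Dd (Ej a) (fun p : P2 => ρ p.1 p.2)) (s, y) := fun a s y => deriv_slice' (Dd_smooth hρ' _) s y
  have dq0 : ∀ (s : ℝ) (y : V), DifferentiableAt ℝ (fun z => q s z) y := fun s y => diff_slice hq' s y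
  have dU0 : ∀ (j : Fin 3) (s : ℝ) (y : V), DifferentiableAt ℝ (fun z => Uq s z j) y := fun j s y => diff_slice (hW j) s y
  have dq1 : ∀ (a : Fin 3) (s : ℝ) (y : V), DifferentiableAt ℝ (fun z => Dd (Ej a) (fun p : P2 => q p.1 p.2) (s, z)) y := fun a s y => diff_slice (Dd_smooth hq' _) s y
  have dρ1 : ∀ (a : Fin 3) (s : ℝ) (y : V), DifferentiableAt ℝ (fun z => Dd (Ej a) (fun p : P2 => ρ p.1 p.2) (s, z)) y := fun a s y => diff_slice (Dd_smooth hρ' _) s y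
  have dW1 : ∀ (j a : Fin 3) (s : ℝ) (y : V), DifferentiableAt ℝ (fun z => Dd (Ej a) (fun p : P2 => Uq p.1 p.2 j) (s, z)) y := fun j a s y => diff_slice (Dd_smooth (hW j) _) s y
  have dtq1 : ∀ (a : Fin 3) (s : ℝ) (y : V), DifferentiableAt ℝ (fun u => Dd (Ej a) (fun p : P2 => q p.1 p.2) (u, y)) s := fun a s y => diff_slice_t (Dd_smooth hq' _) s y
  have dtρ1 : ∀ (a : Fin 3) (s : ℝ) (y : V), DifferentiableAt ℝ (fun u => Dd (Ej a) (fun p : P2 => ρ p.1 p.2) (u, y)) s := fun a s y => diff_slice_t (Dd_smooth hρ' _) s y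
  have hQt : ∀ (s : ℝ) (y : V), Dd Et (fun p : P2 => q p.1 p.2) (s, y) = -(Dd (Ej 0) (fun p : P2 => q p.1 p.2) (s, y) * Uq s y 0 + q s y * Dd (Ej 0) (fun p : P2 => Uq p.1 p.2 0) (s, y) + Dd (Ej 1) (fun p : P2 => q p.1 p.2) (s, y) * Uq s y 1 + q s y * Dd (Ej 1) (fun p : P2 => Uq p.1 p.2 1) (s, y) + Dd (Ej 2) (fun p : P2 => q p.1 p.2) (s, y) * Uq s y 2 + q s y * Dd (Ej 2) (fun p : P2 => Uq p.1 p.2 2) (s, y)) := by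
    intro s y
    have h := hcont s y
    rw [show tder q s y = Dd Et (fun p : P2 => q p.1 p.2) (s, y) from deriv_slice' hq' s y] at h
    simp only [div3, Fin.sum_univ_three, Pi.smul_apply, smul_eq_mul] at h
    rw [show pd 0 (fun z => q s z * Uq s z 0) y = Dd (Ej 0) (fun p : P2 => q p.1 p.2 * Uq p.1 p.2 0) (s, y) from pd_slice' (hq'.mul (hW 0)) 0 s y] at h
    rw [show pd 1 (fun z => q s z * Uq s z 1) y = Dd (Ej 1) (fun p : P2 => q p.1 p.2 * Uq p.1 p.2 1) (s, y) from pd_slice' (hq'.mul (hW 1)) 1 s y] at h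
    rw [show pd 2 (fun z => q s z * Uq s z 2) y = Dd (Ej 2) (fun p : P2 => q p.1 p.2 * Uq p.1 p.2 2) (s, y) from pd_slice' (hq'.mul (hW 2)) 2 s y] at h
    rw [Dd_mul hq' (hW 0) (Ej 0) (s, y), Dd_mul hq' (hW 1) (Ej 1) (s, y), Dd_mul hq' (hW 2) (Ej 2) (s, y)] at h
    simp only at h
    linarith
  have hρt : ∀ (s : ℝ) (y : V), Dd Et (fun p : P2 => ρ p.1 p.2) (s, y) = -(Uq s y 0 * Dd (Ej 0) (fun p : P2 => ρ p.1 p.2) (s, y) + Uq s y 1 * Dd (Ej 1) (fun p : P2 => ρ p.1 p.2) (s, y) + Uq s y 2 * Dd (Ej 2) (fun p : P2 => ρ p.1 p.2) (s, y)) := by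
    intro s y
    have h := hadv s y
    rw [show tder ρ s y = Dd Et (fun p : P2 => ρ p.1 p.2) (s, y) from deriv_slice' hρ' s y] at h
    simp only [dot3, grad3, Fin.sum_univ_three, cρ] at h
    linarith
  have hQtF : Dd Et (fun p : P2 => q p.1 p.2) = fun p : P2 => -(Dd (Ej 0) (fun p : P2 => q p.1 p.2) p * Uq p.1 p.2 0 + q p.1 p.2 * Dd (Ej 0) (fun p : P2 => Uq p.1 p.2 0) p + Dd (Ej 1) (fun p : P2 => q p.1 p.2) p * Uq p.1 p.2 1 + q p.1 p.2 * Dd (Ej 1) (fun p : P2 => Uq p.1 p.2 1) p + Dd (Ej 2) (fun p : P2 => q p.1 p.2) p * Uq p.1 p.2 2 + q p.1 p.2 * Dd (Ej 2) (fun p : P2 => Uq p.1 p.2 2) p) := funext fun p => hQt p.1 p.2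
  have hρtF : Dd Et (fun p : P2 => ρ p.1 p.2) = fun p : P2 => -(Uq p.1 p.2 0 * Dd (Ej 0) (fun p : P2 => ρ p.1 p.2) p + Uq p.1 p.2 1 * Dd (Ej 1) (fun p : P2 => ρ p.1 p.2) p + Uq p.1 p.2 2 * Dd (Ej 2) (fun p : P2 => ρ p.1 p.2) p) := funext fun p => hρt p.1 p.2
  have commQ : ∀ (a : Fin 3) (p : P2), Dd Et (Dd (Ej a) (fun p : P2 => q p.1 p.2)) p = Dd (Ej a) (Dd Et (fun p : P2 => q p.1 p.2)) p := fun a p => Dd_comm hq' Et (Ej a) p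
  have commρ : ∀ (a : Fin 3) (p : P2), Dd Et (Dd (Ej a) (fun p : P2 => ρ p.1 p.2)) p = Dd (Ej a) (Dd Et (fun p : P2 => ρ p.1 p.2)) p := fun a p => Dd_comm hρ' Et (Ej a) p
  intro t x
  funext i
  fin_cases i <;>
  · simp only [hB, tderV, curl3, cross3, grad3, div3, dot3, Fin.sum_univ_three,
      Pi.sub_apply, Pi.neg_apply, Matrix.cons_val_zero, Matrix.cons_val_one,
      Matrix.head_cons, Matrix.cons_val_two, Matrix.tail_cons, Fin.isValue, Fin.mk_zero, Fin.mk_one, Fin.reduceFinMk, Nat.succ_eq_add_one, Nat.reduceAdd]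
    simp only [cq, cρ, cU]
    simp (disch := solve_by_elim (maxDepth := 30) [dq0, dU0, dq1, dρ1, dW1, dtq1, dtρ1, DifferentiableAt.mul, DifferentiableAt.add, DifferentiableAt.sub, DifferentiableAt.neg]) only [pd_mul, pd_add, pd_sub, pd_neg, deriv_fun_mul, deriv_fun_add, deriv_fun_sub, deriv.neg']
    simp only [cq, cρ, cU, cq2, cρ2, cU2, ctq, ctρ]
    simp only [commQ, commρ, hQtF, hρtF]
    simp (disch := solve_by_elim (maxDepth := 30) [hq', hρ', hW, Dd_smooth, ContDiff.mul, ContDiff.add, ContDiff.sub, ContDiff.neg]) only [Dd_neg, Dd_add, Dd_mul, Dd_sub]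
    simp only [Dd_comm hq' (Ej 1) (Ej 0), Dd_comm hq' (Ej 2) (Ej 0), Dd_comm hq' (Ej 2) (Ej 1), Dd_comm hρ' (Ej 1) (Ej 0), Dd_comm hρ' (Ej 2) (Ej 0), Dd_comm hρ' (Ej 2) (Ej 1), Dd_comm (hW 0) (Ej 1) (Ej 0), Dd_comm (hW 0) (Ej 2) (Ej 0), Dd_comm (hW 0) (Ej 2) (Ej 1), Dd_comm (hW 1) (Ej 1) (Ej 0), Dd_comm (hW 1) (Ej 2) (Ej 0), Dd_comm (hW 1) (Ej 2) (Ej 1), Dd_comm (hW 2) (Ej 1) (Ej 0), Dd_comm (hW 2) (Ej 2) (Ej 0), Dd_comm (hW 2) (Ej 2) (Ej 1)]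
    ring
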